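/- Let Q = Qᵀ ≻ 0 strictly block diagonally dominant with gaps δ_i(Q) > 0, A = diag(α_1 I,...,α_N I) with α_i > 0, x̂ = -Q⁻¹r, x̂_A = -(Q+A)⁻¹r, and η ∈ (0,1). If α_i ≤ (η/(1-η)) δ_i(Q) for all i ∈ [N], then ‖x̂ - x̂_A‖_{2,p} / ‖x̂‖_{2,p} ≤ η (assuming x̂ ≠ 0). -/

import Mathlib

open Matrix BigOperators Finset

noncomputable def specNorm {𝕜 : Type*} [RCLike 𝕜] {m n : Type*} [Fintype m] [Fintype n]
    [DecidableEq m] [DecidableEq n] (A : Matrix m n 𝕜) : ℝ :=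
  ‖LinearMap.toContinuousLinearMap (Matrix.toEuclideanLin A)‖

noncomputable def minEig {n : Type*} [Fintype n] [DecidableEq n] (A : Matrix n n ℝ) : ℝ :=
  sInf {μ : ℝ | (A - μ • 1).det = 0}

noncomputable def maxEig {n : Type*} [Fintype n] [DecidableEq n] (A : Matrix n n ℝ) : ℝ :=
  sSup {μ : ℝ | (A - μ • 1).det = 0}

def blk {N : ℕ} {d : Fin N → ℕ}
    (B : Matrix ((i : Fin N) × Fin (d i)) ((i : Fin N) × Fin (d i)) ℝ) (i j : Fin N) :
    Matrix (Fin (d i)) (Fin (d j)) ℝ := fun a b => B ⟨i, a⟩ ⟨j, b⟩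

noncomputable def eNorm {k : ℕ} (v : Fin k → ℝ) : ℝ := Real.sqrt (∑ a, v a ^ 2)

noncomputable def blockVecNorm {N : ℕ} {d : Fin N → ℕ}
    (x : ((i : Fin N) × Fin (d i)) → ℝ) : ℝ :=
  ⨆ i, eNorm (fun a => x ⟨i, a⟩)

noncomputable def blockOpNorm {N : ℕ} {d : Fin N → ℕ}
    (B : Matrix ((i : Fin N) × Fin (d i)) ((i : Fin N) × Fin (d i)) ℝ) : ℝ :=
  sInf {c | 0 ≤ c ∧ ∀ x, blockVecNorm (B.mulVec x) ≤ c * blockVecNorm x}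


/-! The error `e = x̂ - x̂_A` solves `(Q + A) e = A x̂`. Take a block `i` on which `‖e_i‖` attains
`‖e‖_{2,p}`. The Rayleigh bound `λ_min(Q_ii) ‖w‖² ≤ wᵀ Q_ii w` on the diagonal block, together with
`‖Q_ij e_j‖ ≤ ‖Q_ij‖₂ ‖e‖_{2,p}` off the diagonal, gives `‖((Q + A) e)_i‖ ≥ (δ_i + α_i) ‖e‖_{2,p}`,
while `‖(A x̂)_i‖ = α_i ‖x̂_i‖ ≤ α_i ‖x̂‖_{2,p}`. So the relative error is at most
`α_i / (δ_i + α_i)`, which is `≤ η` exactly when `α_i ≤ η / (1 - η) δ_i`. -/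

section Spectrum

variable {n : Type*} [Fintype n] [DecidableEq n] {M : Matrix n n ℝ}

theorem minEig_eq_sInf_spectrum (M : Matrix n n ℝ) : minEig M = sInf (spectrum ℝ M) := by
  rw [minEig]
  congr 1
  ext μ
  rw [Set.mem_ofPred_eq, spectrum.mem_iff, Algebra.algebraMap_eq_smul_one, isUnit_iff_isUnit_det,
    ← neg_sub, det_neg, isUnit_iff_ne_zero, not_not]
  simp

theorem Matrix.IsHermitian.posSemidef_sub_minEig_smul_one (hM : M.IsHermitian) :
    (M - minEig M • 1).PosSemidef := by
  rw [posSemidef_iff_isHermitian_and_spectrum_nonneg]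
  refine ⟨hM.sub (isHermitian_one.smul (IsSelfAdjoint.all _)), fun μ hμ => ?_⟩
  rw [← Algebra.algebraMap_eq_smul_one, ← spectrum.sub_singleton_eq, Set.sub_singleton] at hμ
  obtain ⟨ν, hν, rfl⟩ := hμ
  rw [Set.mem_ofPred_eq, sub_nonneg, minEig_eq_sInf_spectrum]
  exact csInf_le M.finite_real_spectrum.bddBelow hν

theorem Matrix.IsHermitian.minEig_mul_dotProduct_self_le (hM : M.IsHermitian) (w : n → ℝ) :
    minEig M * (w ⬝ᵥ w) ≤ w ⬝ᵥ M *ᵥ w := by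
  simpa [sub_mulVec, dotProduct_sub, smul_mulVec, dotProduct_smul] using
    hM.posSemidef_sub_minEig_smul_one.dotProduct_mulVec_nonneg w

end Spectrum

theorem Matrix.add_mulVec_neg_inv_mulVec_sub {n R : Type*} [Fintype n] [DecidableEq n]
    [CommRing R] {P A : Matrix n n R} (hP : IsUnit P.det) (hPA : IsUnit (P + A).det) (r : n → R) :
    (P + A) *ᵥ (-(P⁻¹ *ᵥ r) - -((P + A)⁻¹ *ᵥ r)) = A *ᵥ -(P⁻¹ *ᵥ r) := by
  have hsolve : ∀ M : Matrix n n R, IsUnit M.det → M *ᵥ (M⁻¹ *ᵥ r) = r := fun M hM => by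
    rw [mulVec_mulVec, mul_nonsing_inv _ hM, one_mulVec]
  rw [mulVec_sub, mulVec_neg, mulVec_neg, hsolve _ hPA, add_mulVec, hsolve _ hP, mulVec_neg]
  abel

section EuclideanNorm

variable {m k : ℕ}

theorem eNorm_eq_norm_toLp (v : Fin k → ℝ) : eNorm v = ‖WithLp.toLp 2 v‖ := by
  simp [eNorm, EuclideanSpace.norm_eq]

theorem eNorm_nonneg (v : Fin k → ℝ) : 0 ≤ eNorm v := Real.sqrt_nonneg _

theorem eNorm_pos {v : Fin k → ℝ} (hv : v ≠ 0) : 0 < eNorm v := by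
  rw [eNorm_eq_norm_toLp, norm_pos_iff]
  simpa using hv

theorem eNorm_sq (v : Fin k → ℝ) : eNorm v ^ 2 = v ⬝ᵥ v := by
  rw [eNorm_eq_norm_toLp, ← real_inner_self_eq_norm_sq, EuclideanSpace.inner_toLp_toLp]
  simp

theorem dotProduct_le_eNorm_mul_eNorm (u v : Fin k → ℝ) : u ⬝ᵥ v ≤ eNorm u * eNorm v := by
  rw [eNorm_eq_norm_toLp, eNorm_eq_norm_toLp, mul_comm]
  simpa [EuclideanSpace.inner_toLp_toLp] using
    real_inner_le_norm (WithLp.toLp 2 v) (WithLp.toLp 2 u)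

theorem eNorm_smul (c : ℝ) (v : Fin k → ℝ) : eNorm (c • v) = |c| * eNorm v := by
  rw [eNorm_eq_norm_toLp, eNorm_eq_norm_toLp, WithLp.toLp_smul, norm_smul, Real.norm_eq_abs]

theorem eNorm_sub_eNorm_le_eNorm_add (u v : Fin k → ℝ) : eNorm u - eNorm v ≤ eNorm (u + v) := by
  simpa only [eNorm_eq_norm_toLp, WithLp.toLp_add] using norm_sub_le_norm_add _ _

theorem eNorm_sum_le {ι : Type*} (s : Finset ι) (f : ι → Fin k → ℝ) :
    eNorm (∑ j ∈ s, f j) ≤ ∑ j ∈ s, eNorm (f j) := by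
  simpa only [eNorm_eq_norm_toLp, WithLp.toLp_sum] using norm_sum_le _ _

theorem eNorm_mulVec_le (B : Matrix (Fin m) (Fin k) ℝ) (w : Fin k → ℝ) :
    eNorm (B *ᵥ w) ≤ specNorm B * eNorm w := by
  rw [eNorm_eq_norm_toLp, eNorm_eq_norm_toLp]
  exact (LinearMap.toContinuousLinearMap (toEuclideanLin B)).le_opNorm (WithLp.toLp 2 w)

theorem Matrix.IsHermitian.minEig_add_mul_eNorm_le {M : Matrix (Fin k) (Fin k) ℝ}
    (hM : M.IsHermitian) (c : ℝ) (w : Fin k → ℝ) :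
    (minEig M + c) * eNorm w ≤ eNorm (M *ᵥ w + c • w) := by
  have hrayleigh : (minEig M + c) * eNorm w ^ 2 ≤ (M *ᵥ w + c • w) ⬝ᵥ w := by
    have := hM.minEig_mul_dotProduct_self_le w
    rw [eNorm_sq, add_dotProduct, smul_dotProduct, smul_eq_mul, dotProduct_comm (M *ᵥ w)]
    linarith
  have hcs := dotProduct_le_eNorm_mul_eNorm (M *ᵥ w + c • w) w
  rcases (eNorm_nonneg w).eq_or_lt with hw | hw
  · rw [← hw, mul_zero]
    exact eNorm_nonneg _
  · nlinarith

end EuclideanNorm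

section Blocks

variable {N : ℕ} {d : Fin N → ℕ}

def blkVec (x : ((i : Fin N) × Fin (d i)) → ℝ) (i : Fin N) : Fin (d i) → ℝ :=
  fun a => x ⟨i, a⟩

noncomputable def blockGap (B : Matrix ((i : Fin N) × Fin (d i)) ((i : Fin N) × Fin (d i)) ℝ)
    (i : Fin N) : ℝ :=
  minEig (blk B i i) - ∑ j ∈ univ.erase i, specNorm (blk B i j)

theorem Matrix.IsHermitian.blk_self
    {B : Matrix ((i : Fin N) × Fin (d i)) ((i : Fin N) × Fin (d i)) ℝ} (hB : B.IsHermitian)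
    (i : Fin N) : (blk B i i).IsHermitian := by
  ext a b
  exact hB.apply ⟨i, a⟩ ⟨i, b⟩

theorem blkVec_add (x y : ((i : Fin N) × Fin (d i)) → ℝ) (i : Fin N) :
    blkVec (x + y) i = blkVec x i + blkVec y i :=
  rfl

theorem blkVec_mulVec (B : Matrix ((i : Fin N) × Fin (d i)) ((i : Fin N) × Fin (d i)) ℝ)
    (x : ((i : Fin N) × Fin (d i)) → ℝ) (i : Fin N) :
    blkVec (B *ᵥ x) i = ∑ j, blk B i j *ᵥ blkVec x j := by
  ext a
  simp only [blkVec, mulVec, dotProduct, Finset.sum_apply]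
  rw [← Finset.univ_sigma_univ, Finset.sum_sigma]
  rfl

theorem blkVec_diagonal_mulVec (α : Fin N → ℝ) (x : ((i : Fin N) × Fin (d i)) → ℝ) (i : Fin N) :
    blkVec (diagonal (fun a => α a.1) *ᵥ x) i = α i • blkVec x i := by
  ext a
  simp [blkVec, mulVec_diagonal]

theorem eNorm_blkVec_le_blockVecNorm (x : ((i : Fin N) × Fin (d i)) → ℝ) (i : Fin N) :
    eNorm (blkVec x i) ≤ blockVecNorm x :=
  le_ciSup (f := fun i => eNorm (blkVec x i)) (Set.finite_range _).bddAbove i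

theorem exists_blockVecNorm_eq_eNorm_blkVec [Nonempty (Fin N)]
    (x : ((i : Fin N) × Fin (d i)) → ℝ) :
    ∃ i, blockVecNorm x = eNorm (blkVec x i) :=
  (exists_eq_ciSup_of_finite (f := fun i => eNorm (blkVec x i))).imp fun _ h => h.symm

theorem blockVecNorm_pos {x : ((i : Fin N) × Fin (d i)) → ℝ} (hx : x ≠ 0) :
    0 < blockVecNorm x := by
  obtain ⟨⟨i, a⟩, hxia⟩ := Function.ne_iff.mp hx
  have hblock : blkVec x i ≠ 0 := Function.ne_iff.mpr ⟨a, hxia⟩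
  exact (eNorm_pos hblock).trans_le (eNorm_blkVec_le_blockVecNorm x i)

theorem blockGap_add_mul_blockVecNorm_le
    (B : Matrix ((i : Fin N) × Fin (d i)) ((i : Fin N) × Fin (d i)) ℝ) (α : Fin N → ℝ)
    {x : ((i : Fin N) × Fin (d i)) → ℝ} {i : Fin N}
    (hB : (blk B i i).IsHermitian) (hi : blockVecNorm x = eNorm (blkVec x i)) :
    (blockGap B i + α i) * blockVecNorm x ≤
      eNorm (blkVec ((B + diagonal fun a => α a.1) *ᵥ x) i) := by
  set w := blkVec x i
  set offDiag := ∑ j ∈ univ.erase i, blk B i j *ᵥ blkVec x j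
  have hsplit : blkVec ((B + diagonal fun a => α a.1) *ᵥ x) i
      = (blk B i i *ᵥ w + α i • w) + offDiag := by
    rw [add_mulVec, blkVec_add, blkVec_mulVec, blkVec_diagonal_mulVec,
      ← add_sum_erase _ _ (mem_univ i)]
    abel
  have hoffDiag : eNorm offDiag ≤ (∑ j ∈ univ.erase i, specNorm (blk B i j)) * eNorm w := by
    rw [sum_mul]
    refine (eNorm_sum_le _ _).trans (sum_le_sum fun j _ => (eNorm_mulVec_le _ _).trans ?_)
    exact mul_le_mul_of_nonneg_left (hi ▸ eNorm_blkVec_le_blockVecNorm x j) (norm_nonneg _)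
  have hdiag := hB.minEig_add_mul_eNorm_le (α i) w
  have htri := eNorm_sub_eNorm_le_eNorm_add (blk B i i *ᵥ w + α i • w) offDiag
  rw [hsplit, hi, blockGap]
  linarith

end Blocks

theorem div_le_of_add_mul_le_mul {α δ η E X : ℝ} (hα : 0 < α) (hη : η ∈ Set.Ioo 0 1)
    (hαle : α ≤ η / (1 - η) * δ) (hX : 0 < X) (h : (δ + α) * E ≤ α * X) : E / X ≤ η := by
  obtain ⟨hη0, hη1⟩ := hη
  have hαη : α ≤ η * (δ + α) := by
    rw [div_mul_eq_mul_div, le_div_iff₀ (sub_pos.mpr hη1)] at hαle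
    linarith
  have hgap : 0 < δ + α := pos_of_mul_pos_right (hα.trans_le hαη) hη0.le
  rw [div_le_iff₀ hX]
  refine le_of_mul_le_mul_left ?_ hgap
  calc (δ + α) * E ≤ α * X := h
    _ ≤ η * (δ + α) * X := mul_le_mul_of_nonneg_right hαη hX.le
    _ = (δ + α) * (η * X) := by ring

theorem relative_state_error_bound_general {N : ℕ} {d : Fin N → ℕ}
    (Q : Matrix ((i : Fin N) × Fin (d i)) ((i : Fin N) × Fin (d i)) ℝ)
    (hQ : Q.PosDef)
    (δ : Fin N → ℝ)
    (hδ : ∀ i, δ i = minEig (blk Q i i) - ∑ j ∈ Finset.univ.erase i, specNorm (blk Q i j))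
    (α : Fin N → ℝ) (hα : ∀ i, 0 < α i)
    (A : Matrix ((i : Fin N) × Fin (d i)) ((i : Fin N) × Fin (d i)) ℝ)
    (hA : A = Matrix.diagonal (fun a => α a.1))
    (r : ((i : Fin N) × Fin (d i)) → ℝ)
    (η : ℝ) (hη : η ∈ Set.Ioo (0 : ℝ) 1)
    (hαle : ∀ i, α i ≤ η / (1 - η) * δ i)
    (hx : -(Q⁻¹.mulVec r) ≠ 0) :
    blockVecNorm (-(Q⁻¹.mulVec r) - -((Q + A)⁻¹.mulVec r))
      / blockVecNorm (-(Q⁻¹.mulVec r)) ≤ η := by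
  set x := -(Q⁻¹ *ᵥ r)
  set e := x - -((Q + A)⁻¹ *ᵥ r)
  subst hA
  have hQA := hQ.add_posSemidef (posSemidef_diagonal_iff.mpr fun a => (hα a.1).le)
  have he := add_mulVec_neg_inv_mulVec_sub hQ.det_pos.ne'.isUnit hQA.det_pos.ne'.isUnit r
  obtain ⟨⟨i₀, _⟩, _⟩ := Function.ne_iff.mp hx
  have : Nonempty (Fin N) := ⟨i₀⟩
  obtain ⟨i, hi⟩ := exists_blockVecNorm_eq_eNorm_blkVec e
  refine div_le_of_add_mul_le_mul (hα i) hη (hαle i) (blockVecNorm_pos hx) ?_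
  calc (δ i + α i) * blockVecNorm e
      ≤ eNorm (blkVec ((Q + diagonal fun a => α a.1) *ᵥ e) i) := by
        rw [hδ i]
        exact blockGap_add_mul_blockVecNorm_le Q α (hQ.1.blk_self i) hi
    _ = α i * eNorm (blkVec x i) := by
        rw [he, blkVec_diagonal_mulVec, eNorm_smul, abs_of_pos (hα i)]
    _ ≤ α i * blockVecNorm x :=
        mul_le_mul_of_nonneg_left (eNorm_blkVec_le_blockVecNorm x i) (hα i).le

theorem relative_state_error_bound {N : ℕ} (hN : 0 < N) {d : Fin N → ℕ}
    (Q : Matrix ((i : Fin N) × Fin (d i)) ((i : Fin N) × Fin (d i)) ℝ)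
    (hQ : Q.PosDef)
    (δ : Fin N → ℝ)
    (hδ : ∀ i, δ i = minEig (blk Q i i) - ∑ j ∈ Finset.univ.erase i, specNorm (blk Q i j))
    (hδpos : ∀ i, 0 < δ i)
    (α : Fin N → ℝ) (hα : ∀ i, 0 < α i)
    (A : Matrix ((i : Fin N) × Fin (d i)) ((i : Fin N) × Fin (d i)) ℝ)
    (hA : A = Matrix.diagonal (fun a => α a.1))
    (r : ((i : Fin N) × Fin (d i)) → ℝ)
    (η : ℝ) (hη : η ∈ Set.Ioo (0 : ℝ) 1)
    (hαle : ∀ i, α i ≤ η / (1 - η) * δ i)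
    (hx : -(Q⁻¹.mulVec r) ≠ 0) :
    blockVecNorm (-(Q⁻¹.mulVec r) - -((Q + A)⁻¹.mulVec r))
      / blockVecNorm (-(Q⁻¹.mulVec r)) ≤ η :=
  relative_state_error_bound_general Q hQ δ hδ α hα A hA r η hη hαle hx
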